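/- In the unit n-cube [0,1]^n with a fixed small ε ∈ (0,1), consider the hyperplane arrangement given by the n hyperplanes {x_i = ε} (i = 1,…,n) and the n−1 slanted hyperplanes {x₁+⋯+x_n = m} (m = 1,…,n−1). Define the 'step' of a chamber as the minimal number of these hyperplanes one must cross to reach it from the center chamber (∩_i {x_i > ε}) ∩ {x₁+⋯+x_n < 1}, crossing each hyperplane at most once. Then for 1 ≤ k ≤ n−1, the number of k-step chambers equals C(n,k) + C(n,k−1) + ⋯ + C(n,0), and the number of n-step chambers equals C(n,n) + ⋯ + C(n,1). -/

import Mathlib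

/-- The open chamber of the unit `n`-cube indexed by `(X, a)`: points with `x i < ε`
when `X i = false` (type `S`) and `x i > ε` when `X i = true` (type `L`), lying between
the slanted hyperplanes `∑ x i = a` and `∑ x i = a + 1`. -/
def chamberRegion (n : ℕ) (ε : ℝ) (p : (Fin n → Bool) × Fin n) : Set (Fin n → ℝ) :=
  {x | (∀ i, 0 < x i ∧ x i < 1) ∧
       (∀ i, if p.1 i then ε < x i else x i < ε) ∧
       ((p.2 : ℝ) < ∑ i, x i ∧ ∑ i, x i < (p.2 : ℝ) + 1)}

/-- The step of the chamber `(X, a)`: the number of `S`-coordinates plus `a`, i.e. the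
minimal number of hyperplanes one must cross (each at most once) to reach it from the
center chamber. -/
def chamberStep (n : ℕ) (p : (Fin n → Bool) × Fin n) : ℕ :=
  (Finset.univ.filter fun i => p.1 i = false).card + (p.2 : ℕ)

/-!
A chamber `(X, a)` is the open box `∏ (lᵢ, uᵢ)`, with `(lᵢ, uᵢ) = (ε, 1)` on the `L`-coordinates
and `(0, ε)` on the `S`-coordinates, cut by the slab `a < ∑ xᵢ < a + 1`. The coordinate sums over
the box fill the interval `(Lε, L + jε)`, where `L` and `j` count the `L`- and `S`-coordinates;
since `Lε, jε ≤ nε < 1`, the chamber is nonempty exactly when `a ≤ L`, i.e. when its step `j + a`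
is at most `n`. Hence for `k ≤ n` the `k`-step chambers are the pairs `(S, k - |S|)` with
`|S| ≤ k < |S| + n`, and there are `∑ C(n, i)` of them over such `i`: over `i ≤ k` when `k < n`,
over `1 ≤ i ≤ n` when `k = n`.
-/

open Finset

theorem exists_forall_mem_Ioo_sum_mem_Ioo_iff {𝕜 ι : Type*} [Field 𝕜] [LinearOrder 𝕜]
    [IsStrictOrderedRing 𝕜] [Fintype ι] [Nonempty ι] {l u : ι → 𝕜} (hlu : ∀ i, l i < u i)
    {a b : 𝕜} (hab : a < b) :
    (∃ x : ι → 𝕜, (∀ i, x i ∈ Set.Ioo (l i) (u i)) ∧ ∑ i, x i ∈ Set.Ioo a b) ↔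
      a < ∑ i, u i ∧ ∑ i, l i < b := by
  have hsum : ∑ i, l i < ∑ i, u i := sum_lt_sum_of_nonempty univ_nonempty fun i _ => hlu i
  constructor
  · rintro ⟨x, hx, hxa, hxb⟩
    exact ⟨hxa.trans (sum_lt_sum_of_nonempty univ_nonempty fun i _ => (hx i).2),
      (sum_lt_sum_of_nonempty univ_nonempty fun i _ => (hx i).1).trans hxb⟩
  · rintro ⟨hau, hlb⟩
    obtain ⟨T, hT, hT'⟩ := exists_between
      (max_lt_iff.2 ⟨lt_min hab hau, lt_min hlb hsum⟩ : max a (∑ i, l i) < min b (∑ i, u i))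
    rw [max_lt_iff] at hT
    rw [lt_min_iff] at hT'
    -- move linearly from the corner `l` towards the corner `u` until the sum reaches `T`
    set θ := (T - ∑ i, l i) / (∑ i, u i - ∑ i, l i)
    have hD : 0 < ∑ i, u i - ∑ i, l i := sub_pos.2 hsum
    have hθ0 : 0 < θ := div_pos (sub_pos.2 hT.2) hD
    have hθ1 : θ < 1 := (div_lt_one hD).2 (by linarith)
    refine ⟨fun i => l i + θ * (u i - l i), fun i => ⟨?_, ?_⟩, ?_⟩
    · nlinarith [hlu i]
    · nlinarith [hlu i]
    · have : ∑ i, (l i + θ * (u i - l i)) = T := by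
        rw [sum_add_distrib, ← mul_sum, sum_sub_distrib, div_mul_cancel₀ _ hD.ne']
        ring
      rw [this]
      exact ⟨hT.1, hT'.1⟩

theorem mem_chamberRegion_iff {n : ℕ} {ε : ℝ} (hε : 0 < ε) (hε1 : ε < 1)
    (X : Fin n → Bool) (a : Fin n) (x : Fin n → ℝ) :
    x ∈ chamberRegion n ε (X, a) ↔
      (∀ i, x i ∈ Set.Ioo (if X i then ε else 0) (if X i then 1 else ε)) ∧
        ∑ i, x i ∈ Set.Ioo (a : ℝ) (a + 1) := by
  simp only [chamberRegion, Set.mem_ofPred_eq, Set.mem_Ioo]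
  rw [← and_assoc, ← forall_and]
  refine and_congr_left' (forall_congr' fun i => ?_)
  split_ifs
  · exact ⟨fun h => ⟨h.2, h.1.2⟩, fun h => ⟨⟨hε.trans h.1, h.2⟩, h.1⟩⟩
  · exact ⟨fun h => ⟨h.1.1, h.2⟩, fun h => ⟨⟨h.1, h.2.trans hε1⟩, h.2⟩⟩

theorem sum_ite_bool {ι R : Type*} [Fintype ι] [Semiring R] (X : ι → Bool) (c d : R) :
    ∑ i, (if X i then c else d) = #{i | X i = true} * c + #{i | X i = false} * d := by
  simp [sum_ite, sum_const, nsmul_eq_mul]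

theorem chamberRegion_nonempty_iff {n : ℕ} {ε : ℝ} (hε : 0 < ε) (hεn : ε * n < 1)
    (p : (Fin n → Bool) × Fin n) :
    (chamberRegion n ε p).Nonempty ↔ chamberStep n p ≤ n := by
  obtain ⟨X, a⟩ := p
  have : Nonempty (Fin n) := ⟨a⟩
  have hε1 : ε < 1 := by nlinarith [(Nat.one_le_cast (α := ℝ)).2 a.pos]
  have hlu : ∀ i, (if X i then ε else 0) < (if X i then 1 else ε) := fun i => by
    split_ifs <;> linarith
  simp only [Set.Nonempty, mem_chamberRegion_iff hε hε1]
  rw [exists_forall_mem_Ioo_sum_mem_Ioo_iff hlu (lt_add_one _), sum_ite_bool, sum_ite_bool]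
  simp only [chamberStep, mul_one, mul_zero, add_zero]
  have hLj := card_filter_add_card_filter_not (s := univ) (fun i => X i = true)
  simp only [Bool.not_eq_true, card_univ, Fintype.card_fin] at hLj
  have ha := a.isLt
  generalize #{i | X i = true} = L, #{i | X i = false} = j, (a : ℕ) = m at *
  subst hLj
  have hjε : j * ε < 1 := by push_cast at hεn; nlinarith
  have hLε : L * ε < 1 := by push_cast at hεn; nlinarith
  constructor
  · rintro ⟨h, -⟩
    have : m < L + 1 := by exact_mod_cast (show (m : ℝ) < L + 1 by linarith)
    omega
  · intro h
    refine ⟨?_, by linarith [(Nat.cast_nonneg m : (0 : ℝ) ≤ m)]⟩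
    rcases Nat.eq_zero_or_pos j with rfl | hj
    · simpa using ha
    · have : (m : ℝ) ≤ L := by exact_mod_cast (by omega : m ≤ L)
      nlinarith [(Nat.one_le_cast (α := ℝ)).2 hj]

theorem card_filter_card_eq_sum_choose {α : Type*} [Fintype α] [DecidableEq α] (P : ℕ → Prop)
    [DecidablePred P] :
    #{s : Finset α | P #s} =
      ∑ i ∈ range (Fintype.card α + 1) with P i, (Fintype.card α).choose i := by
  rw [card_eq_sum_card_fiberwise (f := card) (t := range (Fintype.card α + 1))
    fun s _ => mem_range_succ_iff.2 s.card_le_univ, sum_filter]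
  refine sum_congr rfl fun i _ => ?_
  rw [filter_filter]
  split_ifs with hP
  · rw [← card_univ, ← card_powersetCard, powersetCard_eq_filter, powerset_univ]
    congr 1
    ext s
    simp only [mem_filter_univ]
    exact and_iff_right_of_imp fun hs => hs ▸ hP
  · exact card_eq_zero.2 (filter_eq_empty_iff.2 fun s _ hs => hP (hs.2 ▸ hs.1))

theorem card_filter_chamberStep_eq (n k : ℕ) :
    #{p : (Fin n → Bool) × Fin n | chamberStep n p = k} =
      #{s : Finset (Fin n) | #s ≤ k ∧ k < #s + n} := by
  have hS : ∀ s : Finset (Fin n), ({i | decide (i ∉ s) = false} : Finset (Fin n)) = s := fun s => by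
    ext i
    simp
  refine card_bij' (fun p _ => ({i | p.1 i = false} : Finset (Fin n)))
    (fun s hs => (fun i => decide (i ∉ s), ⟨k - #s, by rw [mem_filter_univ] at hs; omega⟩))
    (fun p hp => ?_) (fun s hs => ?_) (fun p hp => ?_) (fun s _ => hS s)
  · rw [mem_filter_univ] at hp ⊢
    unfold chamberStep at hp
    have := p.2.isLt
    omega
  · rw [mem_filter_univ] at hs ⊢
    unfold chamberStep
    dsimp only
    rw [hS]
    omega
  · rw [mem_filter_univ] at hp
    unfold chamberStep at hp
    refine Prod.ext (funext fun i => ?_) (Fin.ext ?_)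
    · simp
    · dsimp only
      omega

theorem card_nonempty_chamberRegion_chamberStep_eq {n k : ℕ} {ε : ℝ} (hε : 0 < ε)
    (hεn : ε * n < 1) (hk : k ≤ n) :
    Nat.card {p : (Fin n → Bool) × Fin n //
        (chamberRegion n ε p).Nonempty ∧ chamberStep n p = k} =
      ∑ i ∈ range (n + 1) with i ≤ k ∧ k < i + n, n.choose i := by
  have hstep : ∀ p, (chamberRegion n ε p).Nonempty ∧ chamberStep n p = k ↔ chamberStep n p = k :=
    fun p => and_iff_right_of_imp fun h =>
      (chamberRegion_nonempty_iff hε hεn p).2 (h ▸ hk)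
  rw [Nat.card_congr (Equiv.subtypeEquivRight hstep), Nat.card_eq_fintype_card,
    Fintype.card_subtype, card_filter_chamberStep_eq,
    card_filter_card_eq_sum_choose fun i => i ≤ k ∧ k < i + n, Fintype.card_fin]

theorem stmt14_general (n : ℕ) (ε : ℝ) (hε : 0 < ε) (hεn : ε * n < 1) :
    (∀ k : ℕ, 1 ≤ k → k ≤ n - 1 →
      Nat.card {p : (Fin n → Bool) × Fin n //
          (chamberRegion n ε p).Nonempty ∧ chamberStep n p = k} =
        ∑ i ∈ Finset.range (k + 1), n.choose i) ∧
    Nat.card {p : (Fin n → Bool) × Fin n //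
        (chamberRegion n ε p).Nonempty ∧ chamberStep n p = n} =
      ∑ i ∈ Finset.Icc 1 n, n.choose i := by
  refine ⟨fun k _ hk => ?_, ?_⟩
  · rw [card_nonempty_chamberRegion_chamberStep_eq hε hεn (by omega)]
    congr 1
    ext i
    simp only [mem_filter, mem_range]
    omega
  · rw [card_nonempty_chamberRegion_chamberStep_eq hε hεn le_rfl]
    congr 1
    ext i
    simp only [mem_filter, mem_range, mem_Icc]
    omega

/-- Chamber count for the perturbed FLTZ arrangement in the unit `n`-cube: for
`1 ≤ k ≤ n − 1` the number of (nonempty) `k`-step chambers is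
`C(n,k) + C(n,k−1) + ⋯ + C(n,0)`, and the number of `n`-step chambers is
`C(n,n) + ⋯ + C(n,1)`. -/
theorem stmt14 (n : ℕ) (hn : 1 ≤ n) (ε : ℝ) (hε : 0 < ε) (hεn : ε * n < 1) :
    (∀ k : ℕ, 1 ≤ k → k ≤ n - 1 →
      Nat.card {p : (Fin n → Bool) × Fin n //
          (chamberRegion n ε p).Nonempty ∧ chamberStep n p = k} =
        ∑ i ∈ Finset.range (k + 1), n.choose i) ∧
    Nat.card {p : (Fin n → Bool) × Fin n //
        (chamberRegion n ε p).Nonempty ∧ chamberStep n p = n} =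
      ∑ i ∈ Finset.Icc 1 n, n.choose i :=
  stmt14_general n ε hε hεn
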